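/- arXiv:2305.17012 — 8 statements merged into one kernel-verified Lean document; each statement's English description precedes it below -/
import Mathlib

section
/- Let C be a commutative ring and f ∈ C[x₁,…,xₙ] a polynomial that is lexicographically monic, i.e. its leading coefficient with respect to the lexicographic order on monomials (where x₁^{k₁}⋯xₙ^{kₙ} > x₁^{l₁}⋯xₙ^{lₙ} if for some m, kᵢ = lᵢ for i < m and kₘ > lₘ) is equal to 1. Then there exists an invertible C-algebra change of variables x₁,…,xₙ ↔ y₁,…,yₙ such that f becomes monic as a polynomial in yₙ with coefficients in C[y₁,…,y_{n-1}]. -/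
open Finsupp

/-- A multivariate polynomial is *lexicographically monic* if its leading coefficient with
respect to the lexicographic order on monomials equals `1`. -/
def LexMonic {C : Type*} [CommRing C] {n : ℕ} (f : MvPolynomial (Fin n) C) : Prop :=
  ∃ d ∈ f.support, f.coeff d = 1 ∧ ∀ d' ∈ f.support, toLex d' ≤ toLex d

namespace LexMonicAux

open MvPolynomial Polynomial

lemma geom_lt {K : ℕ} (hK : 1 ≤ K) (t : ℕ) :
    (∑ j ∈ Finset.range t, (K - 1) * K ^ j) < K ^ t := by
  induction t with
  | zero => simpa using hK
  | succ t ih =>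
    rw [Finset.sum_range_succ, pow_succ']
    have hx : K ^ t ≤ K * K ^ t := Nat.le_mul_of_pos_left _ hK
    have hsub : (K - 1) * K ^ t = K * K ^ t - K ^ t := by
      rw [Nat.sub_mul, one_mul]
    omega

lemma digit_lt {n K : ℕ} (hK : 1 ≤ K) (d D : Fin (n+1) →₀ ℕ) (hd : ∀ i, d i < K)
    (h : toLex d < toLex D) :
    ∑ i : Fin (n+1), d i * K ^ (n - (i : ℕ)) < ∑ i : Fin (n+1), D i * K ^ (n - (i : ℕ)) := by
  obtain ⟨m, heq, hm⟩ := Finsupp.Lex.lt_iff.mp h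
  simp only [ofLex_toLex] at heq hm
  -- tail bound
  have tail : ∑ i ∈ Finset.Ioi m, d i * K ^ (n - (i : ℕ)) < K ^ (n - (m : ℕ)) := by
    calc ∑ i ∈ Finset.Ioi m, d i * K ^ (n - (i : ℕ))
        ≤ ∑ i ∈ Finset.Ioi m, (K - 1) * K ^ (n - (i : ℕ)) := by
          refine Finset.sum_le_sum fun i _ => ?_
          exact Nat.mul_le_mul_right _ (by have := hd i; omega)
      _ = ∑ j ∈ (Finset.Ioi m).image (fun i : Fin (n+1) => n - (i : ℕ)),
            (K - 1) * K ^ j := by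
          rw [Finset.sum_image]
          intro a _ b _ hab
          have ha := a.is_lt; have hb := b.is_lt
          exact Fin.ext (by simp only at hab; omega)
      _ ≤ ∑ j ∈ Finset.range (n - (m : ℕ)), (K - 1) * K ^ j := by
          refine Finset.sum_le_sum_of_subset ?_
          intro j hj
          simp only [Finset.mem_image, Finset.mem_Ioi] at hj
          obtain ⟨i, hi, rfl⟩ := hj
          have : (m : ℕ) < (i : ℕ) := hi
          have := i.is_lt
          simp only [Finset.mem_range]
          omega
      _ < K ^ (n - (m : ℕ)) := geom_lt hK _
  have split : ∀ e : Fin (n+1) → ℕ,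
      ∑ i : Fin (n+1), e i = (∑ i ∈ Finset.Iio m, e i) + e m + ∑ i ∈ Finset.Ioi m, e i := by
    intro e
    have h1 : (Finset.Iio m) ∪ {m} = Finset.Iic m := by
      ext i; simp [Finset.mem_Iio, Finset.mem_Iic, le_iff_lt_or_eq]
    have h2 : Finset.Iic m ∪ Finset.Ioi m = Finset.univ := by
      ext i; simp [le_or_gt]
    rw [← h2, Finset.sum_union (by
        simp only [Finset.disjoint_left, Finset.mem_Iic, Finset.mem_Ioi]
        exact fun a ha h => absurd h (not_lt.mpr ha)),
      ← h1, Finset.sum_union (Finset.disjoint_singleton_right.mpr (by simp)),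
      Finset.sum_singleton]
  rw [split, split]
  have hhead : ∑ i ∈ Finset.Iio m, d i * K ^ (n - (i : ℕ))
      = ∑ i ∈ Finset.Iio m, D i * K ^ (n - (i : ℕ)) := by
    refine Finset.sum_congr rfl fun i hi => ?_
    rw [heq i (Finset.mem_Iio.mp hi)]
  have hmid : d m * K ^ (n - (m : ℕ)) + K ^ (n - (m : ℕ)) ≤ D m * K ^ (n - (m : ℕ)) := by
    have : (d m + 1) * K ^ (n - (m : ℕ)) ≤ D m * K ^ (n - (m : ℕ)) :=
      Nat.mul_le_mul_right _ hm
    nlinarith [this]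
  have hDtail : 0 ≤ ∑ i ∈ Finset.Ioi m, D i * K ^ (n - (i : ℕ)) := Nat.zero_le _
  omega

noncomputable def σf (C : Type*) [CommRing C] (n K : ℕ) :
    Fin (n+1) → MvPolynomial (Fin (n+1)) C := fun i =>
  if i = Fin.last n then X 0 else X i.rev + X 0 ^ K ^ ((i.rev : ℕ))

noncomputable def τf (C : Type*) [CommRing C] (n K : ℕ) :
    Fin (n+1) → MvPolynomial (Fin (n+1)) C := fun j =>
  if j = 0 then X (Fin.last n) else X j.rev - X (Fin.last n) ^ K ^ ((j : ℕ))

noncomputable def chvar (C : Type*) [CommRing C] (n K : ℕ) :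
    MvPolynomial (Fin (n+1)) C ≃ₐ[C] MvPolynomial (Fin (n+1)) C :=
  AlgEquiv.ofAlgHom (aeval (σf C n K)) (aeval (τf C n K))
    (by
      apply MvPolynomial.algHom_ext
      intro j
      simp only [AlgHom.comp_apply, MvPolynomial.aeval_X, AlgHom.coe_id, id_eq]
      by_cases hj : j = 0
      · subst hj
        simp [τf, σf]
      · have hrev : j.rev ≠ Fin.last n := by
          rw [← Fin.rev_zero, Ne, Fin.rev_inj]; exact hj
        simp only [τf, if_neg hj, map_sub, map_pow, MvPolynomial.aeval_X, σf, if_neg hrev,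
          Fin.rev_rev, if_pos rfl]
        simp only [if_true]; ring
    )
    (by
      apply MvPolynomial.algHom_ext
      intro i
      simp only [AlgHom.comp_apply, MvPolynomial.aeval_X, AlgHom.coe_id, id_eq]
      by_cases hi : i = Fin.last n
      · subst hi
        simp [σf, τf, Fin.rev_zero]
      · have hrev : i.rev ≠ 0 := by
          rw [← Fin.rev_last, Ne, Fin.rev_inj]; exact hi
        simp only [σf, if_neg hi, map_add, map_pow, MvPolynomial.aeval_X, τf, if_neg hrev,
          Fin.rev_rev, if_pos rfl]
        simp only [if_true]; ring
    )

lemma chvar_apply {C : Type*} [CommRing C] {n : ℕ} (K : ℕ) (f : MvPolynomial (Fin (n+1)) C) :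
    chvar C n K f = aeval (σf C n K) f := rfl

end LexMonicAux

/-- A lexicographically monic polynomial in `C[x₁,…,x_{n+1}]` becomes monic in one of the
variables after an invertible `C`-algebra change of variables. -/
theorem lexMonic_exists_change_of_variables_monic (C : Type*) [CommRing C] (n : ℕ)
    (f : MvPolynomial (Fin (n + 1)) C) (hf : LexMonic f) :
    ∃ φ : MvPolynomial (Fin (n + 1)) C ≃ₐ[C] MvPolynomial (Fin (n + 1)) C,
      (MvPolynomial.finSuccEquiv C n (φ f)).Monic := by
  classical
  obtain ⟨D, hDs, hD1, hDmax⟩ := hf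
  rcases subsingleton_or_nontrivial C with hC | hC
  · haveI := Module.subsingleton C (MvPolynomial (Fin n) C)
    exact ⟨AlgEquiv.refl, Subsingleton.elim _ _⟩
  set K : ℕ := f.totalDegree + 1 with hKdef
  have hK : 1 ≤ K := Nat.le_add_left 1 _
  refine ⟨LexMonicAux.chvar C n K, ?_⟩
  set g : Fin (n+1) → Polynomial (MvPolynomial (Fin n) C) :=
    fun i => MvPolynomial.finSuccEquiv C n (LexMonicAux.σf C n K i) with hg
  have hP : MvPolynomial.finSuccEquiv C n (LexMonicAux.chvar C n K f)
      = MvPolynomial.aeval g f := by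
    rw [LexMonicAux.chvar_apply]
    exact MvPolynomial.comp_aeval_apply
      (f := LexMonicAux.σf C n K) (MvPolynomial.finSuccEquiv C n).toAlgHom f
  have hg_monic : ∀ i : Fin (n+1), (g i).Monic ∧ (g i).natDegree = K ^ (n - (i : ℕ)) := by
    intro i
    by_cases hi : i = Fin.last n
    · subst hi
      have hgl : g (Fin.last n) = Polynomial.X := by
        simp [hg, LexMonicAux.σf, MvPolynomial.finSuccEquiv_X_zero]
      have hnn : n - ((Fin.last n : Fin (n+1)) : ℕ) = 0 := by simp
      rw [hgl, hnn]
      exact ⟨Polynomial.monic_X, by simp⟩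
    · have hrev : i.rev ≠ 0 := by
        rw [← Fin.rev_last, Ne, Fin.rev_inj]; exact hi
      obtain ⟨j, hj⟩ : ∃ j : Fin n, i.rev = j.succ :=
        ⟨i.rev.pred hrev, (Fin.succ_pred _ _).symm⟩
      have h1 : MvPolynomial.finSuccEquiv C n (MvPolynomial.X i.rev)
          = Polynomial.C (MvPolynomial.X j) := by
        rw [hj, MvPolynomial.finSuccEquiv_X_succ]
      have hgi : g i = Polynomial.X ^ K ^ ((i.rev : ℕ))
          + Polynomial.C (MvPolynomial.X j) := by
        rw [hg]
        simp only [LexMonicAux.σf, if_neg hi, map_add, map_pow,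
          MvPolynomial.finSuccEquiv_X_zero, h1]
        ring
      have hrevval : ((i.rev : ℕ)) = n - (i : ℕ) := by
        have := Fin.val_rev i
        omega
      rw [hgi, hrevval]
      refine ⟨Polynomial.monic_X_pow_add_C _ (pow_pos hK _).ne', ?_⟩
      rw [Polynomial.natDegree_X_pow_add_C]
  have hM : ∀ d : Fin (n+1) →₀ ℕ,
      (∏ i ∈ d.support, g i ^ d i).Monic ∧
      (∏ i ∈ d.support, g i ^ d i).natDegree
        = ∑ i : Fin (n+1), d i * K ^ (n - (i : ℕ)) := by
    intro d
    have hmon : ∀ i ∈ d.support, (g i ^ d i).Monic := fun i _ => (hg_monic i).1.pow _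
    refine ⟨Polynomial.monic_prod_of_monic _ _ hmon, ?_⟩
    rw [Polynomial.natDegree_prod_of_monic _ _ hmon]
    rw [Finset.sum_congr rfl fun i (_ : i ∈ d.support) => by
      rw [(hg_monic i).1.natDegree_pow, (hg_monic i).2]]
    refine Finset.sum_subset (Finset.subset_univ d.support) ?_
    intro i _ hi
    rw [Finsupp.notMem_support_iff.mp hi, zero_mul]
  rw [hP]
  have hsum : MvPolynomial.aeval g f
      = ∑ d ∈ f.support,
          algebraMap C (Polynomial (MvPolynomial (Fin n) C)) (f.coeff d)
            * ∏ i ∈ d.support, g i ^ d i := by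
    conv_lhs => rw [f.as_sum]
    rw [map_sum]
    exact Finset.sum_congr rfl fun d _ => MvPolynomial.aeval_monomial _ _ _
  rw [hsum, ← Finset.add_sum_erase _ _ hDs, hD1, map_one, one_mul]
  refine (hM D).1.add_of_left ?_
  have hMDne : (∏ i ∈ D.support, g i ^ D i) ≠ 0 := (hM D).1.ne_zero
  rw [Polynomial.degree_eq_natDegree hMDne, (hM D).2]
  refine lt_of_le_of_lt (Polynomial.degree_sum_le _ _) ?_
  rw [Finset.sup_lt_iff (WithBot.bot_lt_coe _)]
  intro d hd
  have hdS : d ∈ f.support := Finset.mem_of_mem_erase hd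
  have hdne : d ≠ D := Finset.ne_of_mem_erase hd
  have hlex : toLex d < toLex D :=
    lt_of_le_of_ne (hDmax d hdS) (fun hc => hdne (toLex.injective hc))
  have hdig : ∀ i, d i < K := by
    intro i
    have h1 : d i ≤ f.degreeOf i := by
      rw [MvPolynomial.degreeOf_eq_sup]
      exact Finset.le_sup (f := fun m => m i) hdS
    exact lt_of_le_of_lt (le_trans h1 (MvPolynomial.degreeOf_le_totalDegree f i))
      (Nat.lt_succ_self _)
  have hN := LexMonicAux.digit_lt hK d D hdig hlex
  refine lt_of_le_of_lt (Polynomial.degree_mul_le _ _) ?_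
  have h0 : (algebraMap C (Polynomial (MvPolynomial (Fin n) C)) (f.coeff d)).degree ≤ 0 := by
    rw [Polynomial.algebraMap_apply]
    exact Polynomial.degree_C_le
  have h2 : (∏ i ∈ d.support, g i ^ d i).degree
      ≤ ((∑ i : Fin (n+1), d i * K ^ (n - (i : ℕ)) : ℕ) : WithBot ℕ) := by
    rw [← (hM d).2]
    exact Polynomial.degree_le_natDegree
  calc (algebraMap C (Polynomial (MvPolynomial (Fin n) C)) (f.coeff d)).degree
        + (∏ i ∈ d.support, g i ^ d i).degree
      ≤ 0 + ((∑ i : Fin (n+1), d i * K ^ (n - (i : ℕ)) : ℕ) : WithBot ℕ) := add_le_add h0 h2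
    _ = ((∑ i : Fin (n+1), d i * K ^ (n - (i : ℕ)) : ℕ) : WithBot ℕ) := zero_add _
    _ < _ := by exact_mod_cast hN
end

section
/- Let A be a commutative associative ring with 1, s a central element, l ≥ 2, v ∈ A^{l-1} a column, u a row of length l−1 over A. Define the l×l matrix μ(u,s,v) with block form: top-left block 1_{l-1} + v·s·u, top-right block v·s², bottom-left block −u·v·u, bottom-right entry 1 − u·v·s. Then μ(u,s,v) is invertible with inverse μ(u,s,−v). -/
open Matrix

/-- The Vaserstein matrix `μ(u,s,v)`: an `l × l` block matrix (here `l = k + 1`, with the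
block decomposition `Fin k ⊕ Unit`) given by
`[[1 + v s u, v s²], [−(uv)u, 1 − (uv)s]]`, where `uv = ∑ uᵢvᵢ`. -/
noncomputable def vasersteinMu {A : Type*} [CommRing A] (k : ℕ) (u : Fin k → A) (s : A)
    (v : Fin k → A) : Matrix (Fin k ⊕ Unit) (Fin k ⊕ Unit) A :=
  Matrix.fromBlocks
    (1 + Matrix.of fun i j => v i * s * u j)
    (Matrix.of fun i (_ : Unit) => v i * s ^ 2)
    (Matrix.of fun (_ : Unit) j => -((∑ i, u i * v i) * u j))
    (Matrix.of fun (_ : Unit) (_ : Unit) => 1 - (∑ i, u i * v i) * s)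

lemma vasersteinMu_key {A : Type*} [CommRing A] (k : ℕ) (u : Fin k → A) (s : A) (v : Fin k → A) :
    vasersteinMu k u s v * vasersteinMu k u s (-v) = 1 := by
  ext i j
  rcases i with i | i <;> rcases j with j | j <;>
    simp [vasersteinMu, Matrix.mul_apply, Fintype.sum_sum_type, one_apply, mul_add, add_mul,
      sub_mul, mul_sub, Finset.sum_add_distrib, Finset.mul_sum, Finset.sum_mul, mul_ite, ite_mul,
      Finset.sum_ite_eq, Finset.sum_ite_eq', mul_comm, mul_left_comm]
  · rw [show (∑ x, v i * (u j * (u x * v x) * s ^ 2))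
        = ∑ x, s * (s * (u j * (u x * (v i * v x)))) from
      Finset.sum_congr rfl fun x _ => by ring]
    ring
  · rw [show (∑ x, v i * (s * (u x * v x) * s ^ 2))
        = ∑ x, v x * (s * (u x * v i) * s ^ 2) from
      Finset.sum_congr rfl fun x _ => by ring]
    ring
  · ring
  · rw [show (∑ x, ∑ y, v x * (u x * (u y * v y) * s ^ 2))
        = ∑ x, ∑ y, s * (s * (u x * (u y * (v x * v y)))) from
      Finset.sum_congr rfl fun x _ => Finset.sum_congr rfl fun y _ => by ring]
    ring

/-- `μ(u,s,v)` is invertible with inverse `μ(u,s,−v)`. -/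
theorem vasersteinMu_mul_inv (A : Type*) [CommRing A] (k : ℕ) (hk : 1 ≤ k)
    (u : Fin k → A) (s : A) (v : Fin k → A) :
    vasersteinMu k u s v * vasersteinMu k u s (-v) = 1 ∧
      vasersteinMu k u s (-v) * vasersteinMu k u s v = 1 := by
  refine ⟨vasersteinMu_key k u s v, ?_⟩
  simpa using vasersteinMu_key k u s (-v)
end

section
/- Let A be a commutative ring, s ∈ A invertible, l ≥ 2, v ∈ A^{l-1} a column, u a row of length l−1. Then the matrix μ(u,s,v) factors as the product E₁·E₂·E₃, where E₁ = [[1_{l-1}, 0],[−u/s, 1]], E₂ = [[1_{l-1}, v s²],[0, 1]], E₃ = [[1_{l-1}, 0],[u/s, 1]]. -/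
open Matrix

/-- If `s` is invertible (with inverse `t`), then `μ(u,s,v)` factors as
`[[1,0],[−u/s,1]] · [[1, v s²],[0,1]] · [[1,0],[u/s,1]]`. -/
theorem vasersteinMu_factorization (A : Type*) [CommRing A] (k : ℕ) (hk : 1 ≤ k)
    (u : Fin k → A) (s t : A) (hst : s * t = 1) (v : Fin k → A) :
    vasersteinMu k u s v =
      Matrix.fromBlocks 1 0 (Matrix.of fun (_ : Unit) j => -(u j * t)) 1 *
        Matrix.fromBlocks 1 (Matrix.of fun i (_ : Unit) => v i * s ^ 2) 0 1 *
          Matrix.fromBlocks 1 0 (Matrix.of fun (_ : Unit) j => u j * t) 1 := by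
  have hts : ∀ x, u x * t * (v x * s ^ 2) = u x * v x * s := fun x => by
    linear_combination (u x * v x * s) * hst
  rw [Matrix.fromBlocks_multiply, Matrix.fromBlocks_multiply]
  unfold vasersteinMu
  ext (i | i) (j | j) <;>
    simp [Matrix.mul_apply, Matrix.one_apply, Finset.mul_sum, Finset.sum_mul]
  · linear_combination (-(v i * s * u j)) * hst
  · simp_rw [hts, ← Finset.sum_mul]
    linear_combination ((∑ x, u x * v x) * u j) * hst
  · simp_rw [hts, ← Finset.sum_mul]
    ring
end

section
/- Let A be a commutative ring whose maximal spectrum Max(A) is a Noetherian topological space of dimension at most d−2. Then A satisfies the absolute flexible stable rank condition AFSR_d: for any row (b₁,…,b_d) over A there exists c₁ ∈ A such that for any unit ε₁ ∈ A*, there exists c₂ ∈ A such that for any unit ε₂ ∈ A*, …, there exists c_{d-1} ∈ A such that for any unit ε_{d-1} ∈ A*, every maximal ideal of A containing the ideal ⟨b₁+ε₁c₁b_d, …, b_{d-1}+ε_{d-1}c_{d-1}b_d⟩ already contains the ideal ⟨b₁,…,b_d⟩. -/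
open TopologicalSpace Topology Set


section Dim
variable {T : Type*} [TopologicalSpace T]

/-- `K` is "good" for `S` if `K ∩ S` is dense in `K`. -/
def IsGoodFor (S : Set T) (K : IrreducibleCloseds T) : Prop :=
  closure ((K : Set T) ∩ S) = (K : Set T)

/-- The subspace `S` has dimension `< n`. -/
def DimLT (S : Set T) (n : ℕ) : Prop :=
  ∀ p : LTSeries (IrreducibleCloseds T), (∀ j, IsGoodFor S (p j)) → p.length < n

lemma dimLT_zero {S : Set T} (h : DimLT S 0) : ∀ x, x ∉ S := by
  intro x hx
  have hK : IsIrreducible (closure {x} : Set T) := isIrreducible_singleton.closure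
  have := h (RelSeries.singleton _ ⟨closure {x}, hK, isClosed_closure⟩) ?_
  · omega
  · intro j
    show closure (closure {x} ∩ S) = closure {x}
    refine subset_antisymm ?_ ?_
    · exact isClosed_closure.closure_subset_iff.mpr inter_subset_left
    · exact closure_mono (subset_inter subset_closure (singleton_subset_iff.mpr hx))

lemma dimLT_of_krullDim {k : ℕ} (h : topologicalKrullDim T ≤ (k : ℕ∞)) (S : Set T) :
    DimLT S (k + 1) := by
  intro p _
  have h1 := Order.LTSeries.length_le_krullDim p
  rw [topologicalKrullDim] at h
  have h2 : (p.length : WithBot ℕ∞) ≤ ((k : ℕ∞) : WithBot ℕ∞) := h1.trans h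
  have h3 : p.length ≤ k := by exact_mod_cast h2
  omega

lemma isPreirreducible_preimage_val {S t : Set T} (ht : IsPreirreducible (t ∩ S)) :
    IsPreirreducible ((Subtype.val ⁻¹' t) : Set S) := by
  rintro u v hu hv ⟨⟨x, hxS⟩, hxt, hxu⟩ ⟨⟨y, hyS⟩, hyt, hyv⟩
  obtain ⟨u', hu', rfl⟩ := isOpen_induced_iff.mp hu
  obtain ⟨v', hv', rfl⟩ := isOpen_induced_iff.mp hv
  obtain ⟨z, ⟨hzt, hzS⟩, hzu, hzv⟩ := ht u' v' hu' hv' ⟨x, ⟨hxt, hxS⟩, hxu⟩ ⟨y, ⟨hyt, hyS⟩, hyv⟩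
  exact ⟨⟨z, hzS⟩, hzt, hzu, hzv⟩

lemma dimLT_step {S C : Set T} (hC : IsClosed C) {n : ℕ} (hS : DimLT S (n + 1))
    (hpt : ∀ u ∈ irreducibleComponents (↥S), ∃ x : ↥S, x ∈ u ∧ (x : T) ∉ C) :
    DimLT (S ∩ C) n := by
  intro p hgood
  -- every member of the chain is good for `S` as well
  have hgood' : ∀ j, IsGoodFor S (p j) := by
    intro j
    refine subset_antisymm ((p j).isClosed.closure_subset_iff.mpr inter_subset_left) ?_
    conv_lhs => rw [← hgood j]
    exact closure_mono (inter_subset_inter_right _ inter_subset_left)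
  have hKgood : closure ((p.last : Set T) ∩ (S ∩ C)) = (p.last : Set T) := hgood (Fin.last _)
  have hKgood' : closure ((p.last : Set T) ∩ S) = (p.last : Set T) := hgood' (Fin.last _)
  have hKC : (p.last : Set T) ⊆ C := by
    conv_lhs => rw [← hKgood]
    exact hC.closure_subset_iff.mpr (inter_subset_right.trans inter_subset_right)
  -- `K ∩ S` is preirreducible
  have hKS : IsPreirreducible ((p.last : Set T) ∩ S) := by
    rw [← isPreirreducible_iff_closure, hKgood']
    exact p.last.isIrreducible.isPreirreducible
  obtain ⟨u, hu_pre, hsub, hmax⟩ :=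
    exists_preirreducible ((Subtype.val ⁻¹' (p.last : Set T)) : Set S)
      (isPreirreducible_preimage_val hKS)
  have hKS_ne : ((p.last : Set T) ∩ S).Nonempty := by
    by_contra hne
    rw [not_nonempty_iff_eq_empty] at hne
    rw [hne, closure_empty] at hKgood'
    exact p.last.isIrreducible.nonempty.ne_empty hKgood'.symm
  have hu_ne : u.Nonempty := by
    obtain ⟨x, hxK, hxS⟩ := hKS_ne
    exact ⟨⟨x, hxS⟩, hsub hxK⟩
  have hu_comp : u ∈ irreducibleComponents (↥S) :=
    ⟨⟨hu_ne, hu_pre⟩, fun v hv hle => (hmax v hv.isPreirreducible hle).le⟩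
  obtain ⟨x, hxu, hxC⟩ := hpt u hu_comp
  -- the new top of the chain
  have himg : IsIrreducible (Subtype.val '' u : Set T) :=
    ⟨hu_ne.image _, hu_pre.image _ continuous_subtype_val.continuousOn⟩
  let Knew : IrreducibleCloseds T := ⟨closure (Subtype.val '' u), himg.closure, isClosed_closure⟩
  have hKsub : (p.last : Set T) ⊆ closure (Subtype.val '' u) := by
    conv_lhs => rw [← hKgood']
    refine closure_minimal ?_ isClosed_closure
    intro y hy
    exact subset_closure (mem_image_of_mem _ (hsub (show (⟨y, hy.2⟩ : ↥S) ∈ _ from hy.1)))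
  have hlt : p.last < Knew := by
    refine lt_of_le_of_ne hKsub ?_
    intro heq
    apply hxC
    apply hKC
    have : (Knew : Set T) = (p.last : Set T) := by rw [← heq]
    rw [← this]
    exact subset_closure (mem_image_of_mem _ hxu)
  have hKnew_good : IsGoodFor S Knew := by
    refine subset_antisymm (isClosed_closure.closure_subset_iff.mpr inter_subset_left) ?_
    refine closure_minimal ?_ isClosed_closure
    rintro y ⟨z, hz, rfl⟩
    exact subset_closure ⟨subset_closure (mem_image_of_mem _ hz), z.2⟩
  have hlen := hS (p.snoc Knew hlt) ?_
  · simpa [RelSeries.snoc, RelSeries.append] using hlen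
  · intro j
    refine Fin.lastCases ?_ ?_ j
    · show IsGoodFor S ((p.snoc Knew hlt).last)
      rw [RelSeries.last_snoc]
      exact hKnew_good
    · intro i
      erw [RelSeries.snoc_castSucc p Knew hlt i]
      exact hgood' i

end Dim

section Ring
variable {A : Type*} [CommRing A]

/-- The "zero locus" of an element in the maximal spectrum. -/
def VV (e : A) : Set (MaximalSpectrum A) := {M | e ∈ M.asIdeal}

lemma isClosed_VV (e : A) : IsClosed (VV e) := by
  have : VV e = MaximalSpectrum.toPrimeSpectrum ⁻¹' (PrimeSpectrum.zeroLocus {e}) := by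
    ext M
    simp [VV, PrimeSpectrum.mem_zeroLocus, MaximalSpectrum.toPrimeSpectrum]
  rw [this]
  exact (PrimeSpectrum.isClosed_zeroLocus _).preimage MaximalSpectrum.toPrimeSpectrum_continuous

/-- Choice of an element `c` which avoids the given maximal ideals containing `b` and lies
in the given maximal ideals not containing `b`. -/
lemma exists_crt (P : Finset (MaximalSpectrum A)) (b : A) :
    ∃ c : A, ∀ M ∈ P, (b ∈ M.asIdeal → c ∉ M.asIdeal) ∧ (b ∉ M.asIdeal → c ∈ M.asIdeal) := by
  classical
  set PB := P.filter (fun M => b ∉ M.asIdeal) with hPB  -- ideals that must contain c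
  set Pb := P.filter (fun M => b ∈ M.asIdeal) with hPb  -- ideals that must avoid c
  have ht : ∀ M ∈ PB, ∃ t, t ∈ M.asIdeal ∧ ∀ N ∈ Pb, t ∉ N.asIdeal := by
    intro M hM
    have hM' := Finset.mem_filter.mp hM
    have hnot : ¬ ((M.asIdeal : Set A) ⊆ ⋃ N ∈ (↑Pb : Set (MaximalSpectrum A)), ↑N.asIdeal) := by
      intro hsub
      obtain ⟨N, hN, hle⟩ := (Ideal.subset_union_prime (f := MaximalSpectrum.asIdeal) M M
        (fun i _ _ _ => i.isMaximal.isPrime)).mp hsub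
      have hNP := Finset.mem_filter.mp hN
      have : M.asIdeal = N.asIdeal := M.isMaximal.eq_of_le N.isMaximal.ne_top hle
      exact hM'.2 (this ▸ hNP.2)
    rw [Set.not_subset] at hnot
    obtain ⟨t, htM, htU⟩ := hnot
    refine ⟨t, htM, fun N hN htN => htU ?_⟩
    exact Set.mem_biUnion hN htN
  choose t htmem htavoid using ht
  refine ⟨∏ M ∈ PB.attach, t M.1 M.2, fun M hM => ⟨fun hbM hc => ?_, fun hbM => ?_⟩⟩
  · -- b ∈ M : c must avoid M
    have hMprime : M.asIdeal.IsPrime := M.isMaximal.isPrime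
    obtain ⟨⟨N, hN⟩, -, htN⟩ := (Ideal.IsPrime.prod_mem_iff).mp hc
    exact htavoid N hN M (Finset.mem_filter.mpr ⟨hM, hbM⟩) htN
  · -- b ∉ M : c must lie in M
    have hMPB : M ∈ PB := Finset.mem_filter.mpr ⟨hM, hbM⟩
    have hMprime : M.asIdeal.IsPrime := M.isMaximal.isPrime
    exact (Ideal.IsPrime.prod_mem_iff).mpr ⟨⟨M, hMPB⟩, Finset.mem_attach _ _, htmem M hMPB⟩

end Ring

section Key
variable {A : Type*} [CommRing A]

lemma key [TopologicalSpace.NoetherianSpace (MaximalSpectrum A)] :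
    ∀ (n : ℕ) (g : Fin n → A) (bd : A) (S : Set (MaximalSpectrum A)),
      (∀ M ∈ S, bd ∉ M.asIdeal) → DimLT S n →
      ∃ c : (i : Fin n) → (Fin i.val → Aˣ) → A,
        ∀ ε : Fin n → Aˣ, ∀ M : MaximalSpectrum A, M ∈ S →
          ¬ (∀ i : Fin n, g i + (ε i : A) * c i (fun j => ε ⟨j.val, j.isLt.trans i.isLt⟩) * bd
              ∈ M.asIdeal) := by
  intro n
  induction n with
  | zero =>
    intro g bd S hbd hdim
    exact ⟨fun i => i.elim0, fun ε M hM _ => dimLT_zero hdim M hM⟩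
  | succ n IH =>
    intro g bd S hbd hdim
    classical
    have hfin : (irreducibleComponents (↥S)).Finite :=
      TopologicalSpace.NoetherianSpace.finite_irreducibleComponents
    have hne : ∀ u : hfin.toFinset, (u : Set ↥S).Nonempty := fun u =>
      (hfin.mem_toFinset.mp u.2).1.1
    let pt : hfin.toFinset → MaximalSpectrum A := fun u => ((hne u).some).1
    let P : Finset (MaximalSpectrum A) := hfin.toFinset.attach.image pt
    obtain ⟨c0, hc0⟩ := exists_crt P (g 0)
    have hstep : ∀ ε0 : Aˣ, DimLT (S ∩ VV (g 0 + (ε0 : A) * c0 * bd)) n := by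
      intro ε0
      refine dimLT_step (isClosed_VV _) hdim ?_
      intro u hu
      have huF : u ∈ hfin.toFinset := hfin.mem_toFinset.mpr hu
      refine ⟨(hne ⟨u, huF⟩).some, (hne ⟨u, huF⟩).some_mem, ?_⟩
      set x : MaximalSpectrum A := ((hne ⟨u, huF⟩).some).1 with hxdef
      have hxP : x ∈ P := Finset.mem_image.mpr ⟨⟨u, huF⟩, Finset.mem_attach _ _, rfl⟩
      have hxS : x ∈ S := ((hne ⟨u, huF⟩).some).2
      have hbdx : bd ∉ x.asIdeal := hbd x hxS
      have hcx := hc0 x hxP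
      intro hmem
      have hmem' : g 0 + (ε0 : A) * c0 * bd ∈ x.asIdeal := hmem
      have hpr := x.isMaximal.isPrime
      by_cases hg : g 0 ∈ x.asIdeal
      · have h1 : (ε0 : A) * c0 * bd ∈ x.asIdeal := by
          have := x.asIdeal.sub_mem hmem' hg; simpa using this
        rcases hpr.mem_or_mem h1 with h2 | h2
        · rcases hpr.mem_or_mem h2 with h3 | h3
          · exact x.isMaximal.ne_top (x.asIdeal.eq_top_of_isUnit_mem h3 ε0.isUnit)
          · exact (hcx.1 hg) h3
        · exact hbdx h2
      · have h1 : (ε0 : A) * c0 * bd ∈ x.asIdeal :=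
          Ideal.mul_mem_right _ _ (Ideal.mul_mem_left _ _ (hcx.2 hg))
        have : g 0 ∈ x.asIdeal := by
          have := x.asIdeal.sub_mem hmem' h1; simpa using this
        exact hg this
    have hrec : ∀ ε0 : Aˣ,
        ∃ c' : (i : Fin n) → (Fin i.val → Aˣ) → A,
          ∀ ε : Fin n → Aˣ, ∀ M : MaximalSpectrum A,
            M ∈ S ∩ VV (g 0 + (ε0 : A) * c0 * bd) →
            ¬ (∀ i : Fin n, g i.succ +
                (ε i : A) * c' i (fun j => ε ⟨j.val, j.isLt.trans i.isLt⟩) * bd ∈ M.asIdeal) :=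
      fun ε0 => IH (fun i => g i.succ) bd _ (fun M hM => hbd M hM.1) (hstep ε0)
    choose c' hc' using hrec
    refine ⟨fun i => Fin.cases (motive := fun i => (Fin i.val → Aˣ) → A)
      (fun _ => c0) (fun i' εs => c' (εs ⟨0, by simp⟩) i' (fun j => εs j.succ)) i, ?_⟩
    intro ε M hMS h
    have h0 := h 0
    simp only [Fin.cases_zero] at h0
    refine hc' (ε 0) (fun k => ε k.succ) M ⟨hMS, h0⟩ ?_
    intro i
    have hi := h i.succ
    simp only [Fin.cases_succ] at hi
    convert hi using 4
    rfl

end Key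

/-- The *absolute flexible stable rank* condition `AFSR_d`, in skolemized form: for every
row `(b₁,…,b_d)`, Player 2 has a strategy (the functions `c i`, each depending on the
previously played units `ε₁,…,εᵢ₋₁`) such that for every choice of units `ε₁,…,ε_{d-1}`,
every maximal ideal containing `⟨b₁+ε₁c₁b_d, …, b_{d-1}+ε_{d-1}c_{d-1}b_d⟩` contains
`⟨b₁,…,b_d⟩`. -/
def AFSR (A : Type*) [CommRing A] (d : ℕ) : Prop :=
  ∀ (hd : 0 < d) (b : Fin d → A),
    ∃ c : (i : Fin (d - 1)) → (Fin i.val → Aˣ) → A,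
      ∀ ε : Fin (d - 1) → Aˣ,
        ∀ M : Ideal A, M.IsMaximal →
          (∀ i : Fin (d - 1),
            b ⟨i.val, by have := i.isLt; omega⟩ +
              (ε i : A) * c i (fun j => ε ⟨j.val, by have := j.isLt; have := i.isLt; omega⟩) *
                b ⟨d - 1, by omega⟩ ∈ M) →
          ∀ i, b i ∈ M

/-- If the maximal spectrum of `A` is a Noetherian space of dimension at most `d - 2`,
then `A` satisfies `AFSR_d`. -/
theorem afsr_of_maximalSpectrum_dim_le (A : Type*) [CommRing A] (d : ℕ) (hd : 2 ≤ d)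
    (hnoeth : TopologicalSpace.NoetherianSpace (MaximalSpectrum A))
    (hdim : topologicalKrullDim (MaximalSpectrum A) ≤ ((d - 2 : ℕ) : WithBot ℕ∞)) :
    AFSR A d := by
  intro _ b
  set bd : A := b ⟨d - 1, by omega⟩ with hbd_def
  set S : Set (MaximalSpectrum A) := {M | bd ∉ M.asIdeal} with hS_def
  have hdimS : DimLT S (d - 1) := by
    have h1 : DimLT S (d - 2 + 1) := dimLT_of_krullDim hdim S
    have h2 : d - 2 + 1 = d - 1 := by omega
    rwa [h2] at h1
  obtain ⟨c, hc⟩ := key (d - 1) (fun i => b ⟨i.val, by have := i.isLt; omega⟩) bd S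
    (fun M hM => hM) hdimS
  refine ⟨c, ?_⟩
  intro ε M hM h
  set Mp : MaximalSpectrum A := ⟨M, hM⟩ with hMp
  by_cases hbd : bd ∈ M
  · intro i
    rcases lt_or_ge i.val (d - 1) with hi | hi
    · have hh := h ⟨i.val, hi⟩
      have h1 : (ε ⟨i.val, hi⟩ : A) * c ⟨i.val, hi⟩
          (fun j => ε ⟨j.val, by have := j.isLt; omega⟩) * bd ∈ M :=
        Ideal.mul_mem_left _ _ (by exact hbd)
      have h2 : b ⟨i.val, by omega⟩ ∈ M := by
        have := M.sub_mem hh h1; simpa using this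
      have : i = ⟨i.val, by omega⟩ := Fin.ext rfl
      rwa [this]
    · have : i = ⟨d - 1, by omega⟩ := by
        apply Fin.ext
        simp only [Fin.val_mk]
        have := i.isLt
        omega
      rwa [this]
  · exfalso
    refine hc ε Mp hbd ?_
    intro i
    exact h i
end

section
/- Let A be a commutative ring and S a multiplicative set in A. Assume the localization A[S⁻¹] satisfies AFSR_d. Then for any row (b₁,…,b_d) with coordinates in A[S⁻¹] and any s ∈ S, there exist c₁,…,c_{d-1} ∈ s·A (i.e., elements of A[S⁻¹] lying in the image of the ideal sA) such that every maximal ideal of A[S⁻¹] containing the ideal ⟨b₁+c₁b_d,…,b_{d-1}+c_{d-1}b_d⟩ already contains the ideal ⟨b₁,…,b_d⟩. -/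
/-- Build a sequence by recursion where each value may depend on all previous values. -/
def buildSeq {β : Type*} {n : ℕ} (U : (i : Fin n) → (Fin i.val → β) → β) : Fin n → β :=
  fun i => U i (fun j => buildSeq U ⟨j.val, j.isLt.trans i.isLt⟩)
termination_by i => i.val
decreasing_by exact j.isLt

theorem buildSeq_eq {β : Type*} {n : ℕ} (U : (i : Fin n) → (Fin i.val → β) → β) (i : Fin n) :
    buildSeq U i = U i (fun j => buildSeq U ⟨j.val, j.isLt.trans i.isLt⟩) := by
  rw [buildSeq]

/-- If the localization `A[S⁻¹]` satisfies `AFSR_d`, then for any row `(b₁,…,b_d)` over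
`A[S⁻¹]` and any `s ∈ S`, there are `c₁,…,c_{d-1}` lying in the image of the ideal `sA`
such that every maximal ideal containing `⟨b₁+c₁b_d,…,b_{d-1}+c_{d-1}b_d⟩` contains
`⟨b₁,…,b_d⟩`. -/
theorem afsr_localization_flexible_choice (A : Type*) [CommRing A] (S : Submonoid A)
    (d : ℕ) (hd : 2 ≤ d) (hAFSR : AFSR (Localization S) d)
    (b : Fin d → Localization S) (s : A) (hs : s ∈ S) :
    ∃ c : Fin (d - 1) → Localization S,
      (∀ i, ∃ a : A, c i = algebraMap A (Localization S) (s * a)) ∧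
        ∀ M : Ideal (Localization S), M.IsMaximal →
          (∀ i : Fin (d - 1),
            b ⟨i.val, by have := i.isLt; omega⟩ + c i * b ⟨d - 1, by omega⟩ ∈ M) →
          ∀ i, b i ∈ M := by
  have hd1 : 0 < d := by omega
  obtain ⟨c, hc⟩ := hAFSR hd1 b
  have key : ∀ x : Localization S, ∃ ε : (Localization S)ˣ, ∃ a : A,
      (ε : Localization S) * x = algebraMap A (Localization S) (s * a) := by
    intro x
    obtain ⟨⟨a, t⟩, rfl⟩ := IsLocalization.mk'_surjective (M := S) (S := Localization S) x
    dsimp only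
    have hu : IsUnit (algebraMap A (Localization S) (s * t)) :=
      IsLocalization.map_units _ ⟨s * t, S.mul_mem hs t.2⟩
    refine ⟨hu.unit, a, ?_⟩
    rw [IsUnit.unit_spec, map_mul, map_mul, mul_assoc,
      IsLocalization.mk'_spec' (Localization S) a t]
  choose U a hUa using fun (i : Fin (d - 1)) (prev : Fin i.val → (Localization S)ˣ) =>
    key (c i prev)
  set ε : Fin (d - 1) → (Localization S)ˣ := buildSeq U with hε
  have hεeq : ∀ i : Fin (d - 1),
      ε i = U i (fun j => ε ⟨j.val, j.isLt.trans i.isLt⟩) := fun i => buildSeq_eq U i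
  refine ⟨fun i => (ε i : Localization S) *
      c i (fun j => ε ⟨j.val, j.isLt.trans i.isLt⟩), ?_, ?_⟩
  · intro i
    refine ⟨a i (fun j => ε ⟨j.val, j.isLt.trans i.isLt⟩), ?_⟩
    show (ε i : Localization S) * c i (fun j => ε ⟨j.val, j.isLt.trans i.isLt⟩) = _
    rw [hεeq i]
    exact hUa i _
  · intro M hM h
    exact hc ε M hM h
end

section
/- Let R be a commutative ring with Bass–Serre dimension BSdim R = d < ∞. Then there is a finite collection P₁,…,P_m of maximal ideals of R such that for any s ∈ R not contained in any Pᵢ, one has BSdim R/(s) < d; in the case d = 0, the conclusion is that s is a unit in R. -/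
open TopologicalSpace

/-- `BSdimLE R δ` : the maximal spectrum of `R` is a finite union of irreducible Noetherian
subspaces of dimension at most `δ` (i.e. the Bass–Serre dimension of `R` is at most `δ`). -/
def BSdimLE (R : Type*) [CommRing R] (δ : ℕ) : Prop :=
  ∃ (m : ℕ) (T : Fin m → Set (MaximalSpectrum R)),
    (⋃ i, T i) = Set.univ ∧
      ∀ i, IsIrreducible (T i) ∧ NoetherianSpace (T i) ∧
        topologicalKrullDim (T i) ≤ (δ : WithBot ℕ∞)

open Topology Set Order

section Helpers

noncomputable def embHomeo {X Y : Type*} [TopologicalSpace X] [TopologicalSpace Y]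
    {e : X → Y} (he : IsEmbedding e) (S : Set X) : S ≃ₜ (e '' S) := by
  refine Equiv.toHomeomorphOfIsInducing (Equiv.Set.image e S he.injective) ?_
  have hcomp : (Subtype.val : (e '' S) → Y) ∘ (Equiv.Set.image e S he.injective)
      = e ∘ (Subtype.val : S → X) := by ext x; rfl
  have h1 : IsInducing ((Subtype.val : (e '' S) → Y) ∘ (Equiv.Set.image e S he.injective)) := by
    rw [hcomp]; exact he.toIsInducing.comp IsInducing.subtypeVal
  have hc : Continuous ((Equiv.Set.image e S he.injective) : S → (e '' S)) :=
    Continuous.subtype_mk (he.continuous.comp continuous_subtype_val) _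
  exact IsInducing.of_comp hc continuous_subtype_val h1

lemma isIrreducible_of_homeo {X Y : Type*} [TopologicalSpace X] [TopologicalSpace Y]
    {S : Set X} {T : Set Y} (h : S ≃ₜ T) (hT : IsIrreducible T) : IsIrreducible S := by
  haveI := Subtype.irreducibleSpace hT
  have h1 : IsIrreducible (Set.univ : Set T) := IrreducibleSpace.isIrreducible_univ _
  have h2 : IsIrreducible (Set.univ : Set S) := by
    have := h1.image h.symm h.symm.continuous.continuousOn
    rwa [Set.image_univ, h.symm.surjective.range_eq] at this
  have := h2.image Subtype.val continuous_subtype_val.continuousOn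
  rwa [Set.image_univ, Subtype.range_coe] at this

lemma chain_extend {X : Type*} [TopologicalSpace X] [IrreducibleSpace X]
    {C : Set X} (hC : IsClosed C) (hne : C ≠ Set.univ)
    (p : LTSeries (IrreducibleCloseds C)) :
    ((p.length + 1 : ℕ) : WithBot ℕ∞) ≤ topologicalKrullDim X := by
  classical
  set φ : IrreducibleCloseds C → IrreducibleCloseds X := fun A =>
    ⟨closure (Subtype.val '' (A : Set C)),
     (A.isIrreducible'.image _ continuous_subtype_val.continuousOn).closure,
     isClosed_closure⟩ with hφ
  have key : ∀ A : IrreducibleCloseds C,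
      Subtype.val '' (A : Set C) = closure (Subtype.val '' (A : Set C)) ∩ C := by
    intro A
    obtain ⟨F, hF, hFA⟩ := isClosed_induced_iff.mp A.isClosed'
    have himg : Subtype.val '' (A : Set C) = F ∩ C := by
      rw [show (A : Set C) = Subtype.val ⁻¹' F from hFA.symm, Subtype.image_preimage_coe,
        Set.inter_comm]
    apply subset_antisymm
    · exact subset_inter (subset_closure) (by rintro x ⟨y, hy, rfl⟩; exact y.2)
    · intro x hx
      rw [himg]
      refine ⟨?_, hx.2⟩
      have : closure (Subtype.val '' (A : Set C)) ⊆ F := by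
        apply closure_minimal _ hF
        rw [himg]; exact inter_subset_left
      exact this hx.1
  have hmono : StrictMono φ := by
    intro A B hAB
    refine lt_of_le_of_ne ?_ ?_
    · exact closure_mono (Set.image_mono (le_of_lt hAB))
    · intro hEq
      have hcar : closure (Subtype.val '' (A : Set C)) = closure (Subtype.val '' (B : Set C)) :=
        congrArg IrreducibleCloseds.carrier hEq
      have : Subtype.val '' (A : Set C) = Subtype.val '' (B : Set C) := by
        rw [key A, key B, hcar]
      have : (A : Set C) = (B : Set C) :=
        Set.image_injective.mpr Subtype.val_injective this
      exact (ne_of_lt hAB) (SetLike.ext' this)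
  set U : IrreducibleCloseds X :=
    ⟨Set.univ, IrreducibleSpace.isIrreducible_univ X, isClosed_univ⟩ with hU
  have hlast : (p.map φ hmono).last < U := by
    rw [LTSeries.last_map]
    refine lt_of_le_of_ne ?_ ?_
    · exact fun x _ => trivial
    · intro hEq
      apply hne
      have hcar : closure (Subtype.val '' ((p.last : IrreducibleCloseds C) : Set C)) = Set.univ :=
        congrArg IrreducibleCloseds.carrier hEq
      have h1 : closure (Subtype.val '' ((p.last : IrreducibleCloseds C) : Set C)) ⊆ C := by
        apply closure_minimal _ hC
        rintro x ⟨y, _, rfl⟩; exact y.2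
      exact subset_antisymm (subset_univ _) (hcar ▸ h1)
  have hq := LTSeries.length_le_krullDim
    (((p.map φ hmono).snoc U hlast : LTSeries (IrreducibleCloseds X)))
  simpa [topologicalKrullDim] using hq

lemma dim_le_sub_one {X : Type*} [TopologicalSpace X] [IrreducibleSpace X]
    {C : Set X} (hCc : IsClosed C) (hne : C ≠ Set.univ) {d : ℕ}
    (hd : topologicalKrullDim X ≤ (d : WithBot ℕ∞)) :
    topologicalKrullDim C ≤ ((d - 1 : ℕ) : WithBot ℕ∞) := by
  rw [topologicalKrullDim, Order.krullDim]
  apply iSup_le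
  intro p
  have h := (chain_extend hCc hne p).trans hd
  have h2 : p.length + 1 ≤ d := by exact_mod_cast h
  have h3 : p.length ≤ d - 1 := by omega
  exact_mod_cast h3

lemma subsingleton_of_dim_le_zero {X : Type*} [TopologicalSpace X] [T1Space X] [IrreducibleSpace X]
    (h : topologicalKrullDim X ≤ ((0 : ℕ) : WithBot ℕ∞)) : Subsingleton X := by
  refine ⟨fun a b => ?_⟩
  by_contra hab
  have hne : ({a} : Set X) ≠ Set.univ := fun hu => hab (by
    have : b ∈ ({a} : Set X) := hu ▸ Set.mem_univ b
    simpa [eq_comm] using this)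
  haveI : IrreducibleSpace ({a} : Set X) := Subtype.irreducibleSpace isIrreducible_singleton
  have := (chain_extend isClosed_singleton hne
    (RelSeries.singleton _ ⟨Set.univ, IrreducibleSpace.isIrreducible_univ _, isClosed_univ⟩)).trans h
  norm_num [RelSeries.singleton_length] at this

variable {R : Type*} [CommRing R]

noncomputable def maxComap (I : Ideal R) : MaximalSpectrum (R ⧸ I) → MaximalSpectrum R := fun m =>
  ⟨m.asIdeal.comap (Ideal.Quotient.mk I),
    haveI := m.isMaximal
    Ideal.comap_isMaximal_of_surjective _ Ideal.Quotient.mk_surjective⟩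

lemma maxComap_range {s : R} :
    Set.range (maxComap (Ideal.span {s})) = {m : MaximalSpectrum R | s ∈ m.asIdeal} := by
  ext m
  constructor
  · rintro ⟨m', rfl⟩
    show s ∈ Ideal.comap _ _
    rw [Ideal.mem_comap,
      Ideal.Quotient.eq_zero_iff_mem.mpr (Ideal.mem_span_singleton_self s)]
    exact zero_mem _
  · intro hm
    have hIle : Ideal.span {s} ≤ m.asIdeal := Ideal.span_le.mpr (Set.singleton_subset_iff.mpr hm)
    set K := m.asIdeal.map (Ideal.Quotient.mk (Ideal.span {s})) with hK
    have hcm : K.comap (Ideal.Quotient.mk (Ideal.span {s})) = m.asIdeal := by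
      rw [hK, Ideal.comap_map_of_surjective _ Ideal.Quotient.mk_surjective,
        ← RingHom.ker_eq_comap_bot, Ideal.mk_ker, sup_eq_left.mpr hIle]
    have hKmax : K.IsMaximal := by
      haveI := m.isMaximal
      rcases Ideal.map_eq_top_or_isMaximal_of_surjective
        (Ideal.Quotient.mk (Ideal.span {s})) Ideal.Quotient.mk_surjective
        m.isMaximal with h | h
      · exfalso
        apply m.isMaximal.ne_top
        rw [← hcm, hK, h, Ideal.comap_top]
      · exact h
    exact ⟨⟨K, hKmax⟩, MaximalSpectrum.ext hcm⟩

lemma maxComap_embedding (I : Ideal R) : IsEmbedding (maxComap I) := by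
  have hcomp : MaximalSpectrum.toPrimeSpectrum ∘ (maxComap I)
      = (PrimeSpectrum.comap (Ideal.Quotient.mk I)) ∘ MaximalSpectrum.toPrimeSpectrum := by
    funext m; exact PrimeSpectrum.ext rfl
  have hemb2 : IsEmbedding (MaximalSpectrum.toPrimeSpectrum ∘ (maxComap I)) := by
    rw [hcomp]
    exact ((PrimeSpectrum.isClosedEmbedding_comap_of_surjective _ _
        Ideal.Quotient.mk_surjective).isEmbedding).comp
      ⟨⟨rfl⟩, MaximalSpectrum.toPrimeSpectrum_injective⟩
  have hcont : Continuous (maxComap I) := by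
    apply continuous_induced_rng.mpr
    exact hemb2.continuous
  exact IsEmbedding.of_comp hcont MaximalSpectrum.toPrimeSpectrum_continuous hemb2

lemma isClosed_maxZ (s : R) : IsClosed {m : MaximalSpectrum R | s ∈ m.asIdeal} := by
  have : {m : MaximalSpectrum R | s ∈ m.asIdeal}
      = MaximalSpectrum.toPrimeSpectrum ⁻¹' (PrimeSpectrum.zeroLocus {s}) := by
    ext m
    simp [PrimeSpectrum.mem_zeroLocus, Set.singleton_subset_iff, MaximalSpectrum.toPrimeSpectrum]
  rw [this]
  exact (PrimeSpectrum.isClosed_zeroLocus _).preimage MaximalSpectrum.toPrimeSpectrum_continuous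

end Helpers

/-- If the Bass–Serre dimension of `R` equals `d` (it is at most `d` and not at most any
smaller value), then there are finitely many maximal ideals `P₁,…,P_m` such that for any
`s` outside all of them, `BSdim R/(s) < d`; when `d = 0` this means `s` is a unit. -/
theorem bassSerre_induction (R : Type*) [CommRing R] (d : ℕ)
    (hle : BSdimLE R d) (hmin : ∀ δ : ℕ, δ < d → ¬ BSdimLE R δ) :
    ∃ (m : ℕ) (P : Fin m → Ideal R), (∀ i, (P i).IsMaximal) ∧
      ∀ s : R, (∀ i, s ∉ P i) →
        (d = 0 → IsUnit s) ∧
          (0 < d → BSdimLE (R ⧸ Ideal.span ({s} : Set R)) (d - 1)) := by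
  classical
  obtain ⟨n, T, hcov, hT⟩ := hle
  choose pt hpt using fun i => (hT i).1.1
  refine ⟨n, fun i => (pt i).asIdeal, fun i => (pt i).isMaximal, ?_⟩
  intro s hs
  have hZcl := isClosed_maxZ (R := R) s
  set Z : Set (MaximalSpectrum R) := {m | s ∈ m.asIdeal} with hZdef
  constructor
  · intro hd0
    by_contra hunit
    have hne : Ideal.span ({s} : Set R) ≠ ⊤ := fun h => hunit (Ideal.span_singleton_eq_top.mp h)
    obtain ⟨M, hM, hle'⟩ := Ideal.exists_le_maximal _ hne
    have hsM : s ∈ M := hle' (Ideal.mem_span_singleton_self s)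
    have hx : (⟨M, hM⟩ : MaximalSpectrum R) ∈ ⋃ i, T i := hcov ▸ Set.mem_univ _
    obtain ⟨i, hi⟩ := Set.mem_iUnion.mp hx
    haveI : IrreducibleSpace (T i) := Subtype.irreducibleSpace (hT i).1
    haveI : Subsingleton (T i) := subsingleton_of_dim_le_zero (by
      have := (hT i).2.2; rwa [hd0] at this)
    have heq : (⟨⟨M, hM⟩, hi⟩ : T i) = ⟨pt i, hpt i⟩ := Subsingleton.elim _ _
    have hMeq : (⟨M, hM⟩ : MaximalSpectrum R) = pt i := congrArg Subtype.val heq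
    exact hs i (show s ∈ (pt i).asIdeal by rw [← hMeq]; exact hsM)
  · intro hdpos
    set I := Ideal.span ({s} : Set R) with hI
    have hfemb := maxComap_embedding (R := R) I
    set f := maxComap I with hf
    have hrange : Set.range f = Z := by rw [hZdef]; exact maxComap_range
    have hdec : ∀ i : Fin n, ∃ S : Set (Set (T i)), S.Finite ∧ (∀ t ∈ S, IsClosed t) ∧
        (∀ t ∈ S, IsIrreducible t) ∧ (Subtype.val ⁻¹' Z : Set (T i)) = ⋃₀ S := by
      intro i
      haveI : NoetherianSpace (T i) := (hT i).2.1
      exact NoetherianSpace.exists_finite_set_isClosed_irreducible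
        (hZcl.preimage continuous_subtype_val)
    choose S hSfin hScl hSirr hSun using hdec
    set 𝒞 : Set (Set (MaximalSpectrum R)) :=
      ⋃ i, (fun t => Subtype.val '' t) '' (S i) with h𝒞
    have h𝒞fin : 𝒞.Finite := Set.finite_iUnion (fun i => (hSfin i).image _)
    haveI := h𝒞fin.fintype
    set m' := Fintype.card 𝒞 with hm'
    set eC : 𝒞 ≃ Fin m' := Fintype.equivFin 𝒞 with heC
    have hCprop : ∀ C ∈ 𝒞, IsIrreducible C ∧ C ⊆ Z ∧ NoetherianSpace C ∧
        topologicalKrullDim C ≤ ((d - 1 : ℕ) : WithBot ℕ∞) := by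
      intro C hC
      rw [h𝒞] at hC
      obtain ⟨i, hCi⟩ := Set.mem_iUnion.mp hC
      obtain ⟨tC, htS, rfl⟩ := hCi
      haveI : NoetherianSpace (T i) := (hT i).2.1
      haveI : IrreducibleSpace (T i) := Subtype.irreducibleSpace (hT i).1
      have htB : tC ⊆ (Subtype.val ⁻¹' Z : Set (T i)) :=
        (hSun i) ▸ Set.subset_sUnion_of_mem htS
      have hBne : (Subtype.val ⁻¹' Z : Set (T i)) ≠ Set.univ := by
        intro h
        exact hs i (by
          have : (⟨pt i, hpt i⟩ : T i) ∈ (Subtype.val ⁻¹' Z : Set (T i)) := h ▸ Set.mem_univ _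
          exact this)
      have htne : tC ≠ Set.univ := fun h => hBne (Set.eq_univ_of_univ_subset (h ▸ htB))
      have hhomeo := embHomeo (IsEmbedding.subtypeVal (p := (· ∈ T i))) tC
      refine ⟨(hSirr i tC htS).image _ continuous_subtype_val.continuousOn, ?_, ?_, ?_⟩
      · exact (Set.image_mono htB).trans (Set.image_preimage_subset _ _)
      · exact (noetherianSpace_iff_of_homeomorph hhomeo).mp inferInstance
      · rw [← IsHomeomorph.topologicalKrullDim_eq hhomeo hhomeo.isHomeomorph]
        exact dim_le_sub_one (hScl i tC htS) htne (hT i).2.2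
    refine ⟨m', fun k => f ⁻¹' ((eC.symm k : Set (MaximalSpectrum R))), ?_, ?_⟩
    · apply Set.eq_univ_of_forall
      intro x
      have hfZ : f x ∈ Z := hrange ▸ Set.mem_range_self x
      have hxT : f x ∈ ⋃ i, T i := hcov ▸ Set.mem_univ _
      obtain ⟨i, hi⟩ := Set.mem_iUnion.mp hxT
      have hB : (⟨f x, hi⟩ : T i) ∈ (Subtype.val ⁻¹' Z : Set (T i)) := hfZ
      rw [hSun i] at hB
      obtain ⟨t, htS, htx⟩ := hB
      have hCmem : (Subtype.val '' t) ∈ 𝒞 := by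
        rw [h𝒞]
        exact Set.mem_iUnion.mpr ⟨i, Set.mem_image_of_mem _ htS⟩
      refine Set.mem_iUnion.mpr ⟨eC ⟨_, hCmem⟩, ?_⟩
      show f x ∈ (eC.symm (eC ⟨_, hCmem⟩) : 𝒞).1
      rw [Equiv.symm_apply_apply]
      exact ⟨⟨f x, hi⟩, htx, rfl⟩
    · intro k
      obtain ⟨hirr, hsub, hnoeth, hdim⟩ := hCprop _ (eC.symm k).2
      have hCr : ((eC.symm k : 𝒞) : Set (MaximalSpectrum R)) ⊆ Set.range f := hrange ▸ hsub
      have himg : f '' (f ⁻¹' ((eC.symm k : 𝒞) : Set (MaximalSpectrum R)))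
          = ((eC.symm k : 𝒞) : Set (MaximalSpectrum R)) := Set.image_preimage_eq_of_subset hCr
      have hk := embHomeo hfemb (f ⁻¹' ((eC.symm k : 𝒞) : Set (MaximalSpectrum R)))
      rw [himg] at hk
      exact ⟨isIrreducible_of_homeo hk hirr,
        (noetherianSpace_iff_of_homeomorph hk).mpr hnoeth,
        by rw [IsHomeomorph.topologicalKrullDim_eq hk hk.isHomeomorph]; exact hdim⟩
end

section
/- Let B be a commutative ring, P₁,…,P_m maximal ideals of B, A = B[y], and f, g ∈ A with f monic in y. If the images of f and g generate the unit ideal in (B/Pᵢ)[y] for every i, then the ideal ⟨f,g⟩ ∩ B of B contains an element not lying in P₁ ∪ … ∪ P_m. -/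
/-- Let `B` be a commutative ring, `P₁,…,P_m` maximal ideals of `B`, and `f, g ∈ B[y]` with
`f` monic. If the images of `f` and `g` generate the unit ideal in `(B/Pᵢ)[y]` for every
`i`, then the ideal `⟨f,g⟩ ∩ B` contains an element lying outside `P₁ ∪ … ∪ P_m`. -/
theorem exists_const_in_span_avoiding_maximals (B : Type*) [CommRing B] (m : ℕ)
    (P : Fin m → Ideal B) (hmax : ∀ i, (P i).IsMaximal)
    (f g : Polynomial B) (hf : f.Monic)
    (hcop : ∀ i, IsCoprime (f.map (Ideal.Quotient.mk (P i)))
      (g.map (Ideal.Quotient.mk (P i)))) :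
    ∃ r : B, Polynomial.C r ∈ Ideal.span ({f, g} : Set (Polynomial B)) ∧
      ∀ i, r ∉ P i := by
  classical
  let A := AdjoinRoot f
  let J : Ideal A := Ideal.span {AdjoinRoot.mk f g}
  let T := A ⧸ J
  -- `T` is a finite `B`-module
  have hfinA : Module.Finite B A := Module.Finite.of_basis (AdjoinRoot.powerBasis' hf).basis
  have hfinT : Module.Finite B T :=
    Module.Finite.of_surjective (IsScalarTower.toAlgHom B A T).toLinearMap
      (Ideal.Quotient.mk_surjective)
  -- algebraMap B T factors
  have halg : (algebraMap B T) = (Ideal.Quotient.mk J).comp ((AdjoinRoot.mk f).comp Polynomial.C) := by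
    rw [IsScalarTower.algebraMap_eq B A T, AdjoinRoot.algebraMap_eq]
    rfl
  -- For each i, the image of P i in T is the unit ideal
  have key : ∀ i, Ideal.map (algebraMap B T) (P i) = ⊤ := by
    intro i
    obtain ⟨u, v, huv⟩ := hcop i
    obtain ⟨U, hU⟩ := Polynomial.map_surjective _ Ideal.Quotient.mk_surjective u
    obtain ⟨V, hV⟩ := Polynomial.map_surjective _ Ideal.Quotient.mk_surjective v
    set h : Polynomial B := 1 - U * f - V * g with hh
    have hmap : h.map (Ideal.Quotient.mk (P i)) = 0 := by
      simp only [hh, Polynomial.map_sub, Polynomial.map_one, Polynomial.map_mul, hU, hV]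
      rw [sub_sub, ← huv]
      ring
    have hmem : h ∈ Ideal.map Polynomial.C (P i) := by
      rw [Ideal.mem_map_C_iff]
      intro n
      have := congrArg (fun p => Polynomial.coeff p n) hmap
      simpa [Ideal.Quotient.eq_zero_iff_mem] using this
    -- image of h in T is 1
    have h1 : (1 : T) = (Ideal.Quotient.mk J) (AdjoinRoot.mk f h) := by
      have e1 : AdjoinRoot.mk f (U * f) = 0 := by
        rw [AdjoinRoot.mk_eq_zero]; exact Dvd.intro_left U rfl
      have e2 : (Ideal.Quotient.mk J) (AdjoinRoot.mk f (V * g)) = 0 := by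
        rw [Ideal.Quotient.eq_zero_iff_mem]
        rw [map_mul]
        exact Ideal.mul_mem_left _ _ (Ideal.subset_span rfl)
      have : AdjoinRoot.mk f h = AdjoinRoot.mk f 1 - AdjoinRoot.mk f (U * f)
          - AdjoinRoot.mk f (V * g) := by
        rw [hh]; simp [map_sub]
      rw [this, e1, sub_zero, map_sub, e2, sub_zero]
      exact (map_one _).symm
    rw [Ideal.eq_top_iff_one, h1, halg, ← Ideal.map_map, ← Ideal.map_map]
    exact Ideal.mem_map_of_mem _ (Ideal.mem_map_of_mem _ hmem)
  -- hence (P i) • ⊤ = ⊤ as B-submodules of T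
  have hsmul : ∀ i, (P i) • (⊤ : Submodule B T) = ⊤ := by
    intro i
    rw [Ideal.smul_top_eq_map, key i]
    rfl
  -- product of all P i
  have hprod : ∀ s : Finset (Fin m), (∏ i ∈ s, P i) • (⊤ : Submodule B T) = ⊤ := by
    intro s
    induction s using Finset.induction_on with
    | empty => rw [Finset.prod_empty, Ideal.one_eq_top, Submodule.top_smul]
    | insert _ _ hx ih =>
      rw [Finset.prod_insert hx, mul_smul, ih, hsmul]
  -- Nakayama
  obtain ⟨r, hr1, hr0⟩ := Submodule.exists_sub_one_mem_and_smul_eq_zero_of_fg_of_le_smul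
    (∏ i, P i) (⊤ : Submodule B T) (Module.finite_def.mp hfinT) (le_of_eq (hprod Finset.univ).symm)
  refine ⟨r, ?_, ?_⟩
  · -- C r ∈ span {f, g}
    have : (algebraMap B T) r = 0 := by
      have := hr0 1 Submodule.mem_top
      rwa [← algebraMap_smul T r (1 : T), smul_eq_mul, mul_one] at this
    rw [halg, RingHom.comp_apply, RingHom.comp_apply, Ideal.Quotient.eq_zero_iff_mem,
      Ideal.mem_span_singleton] at this
    obtain ⟨c, hc⟩ := this
    obtain ⟨q, rfl⟩ := AdjoinRoot.mk_surjective c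
    rw [← map_mul, AdjoinRoot.mk_eq_mk] at hc
    obtain ⟨w, hw⟩ := hc
    rw [Ideal.mem_span_pair]
    exact ⟨w, q, by linear_combination -hw⟩
  · intro i hri
    have h1i : (1 : B) ∈ P i := by
      have : r - 1 ∈ P i := Ideal.prod_le_inf.trans (Finset.inf_le (Finset.mem_univ i)) hr1
      have := (P i).sub_mem hri this
      simpa using this
    exact (hmax i).ne_top ((Ideal.eq_top_iff_one _).mpr h1i)
end

section
/- Let R be a commutative ring and consider a system of finitely many linear equations over R in finitely many unknowns, given by a matrix M ∈ R^{p×q} and a vector c ∈ R^p (the system M·x = c). If for every maximal ideal 𝔪 of R the system has a solution over the localization R_𝔪, then it has a solution over R. -/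
/-- Solvability of a finite system of linear equations over a commutative ring is a local
property: if `M·x = c` has a solution over every localization at a maximal ideal, then it
has a solution over `R`. -/
theorem linear_system_local_global (R : Type*) [CommRing R] (p q : ℕ)
    (M : Matrix (Fin p) (Fin q) R) (c : Fin p → R)
    (hloc : ∀ (𝔪 : Ideal R) (_ : 𝔪.IsMaximal),
      haveI : 𝔪.IsPrime := inferInstance
      ∃ x : Fin q → Localization.AtPrime 𝔪,
        (M.map (algebraMap R (Localization.AtPrime 𝔪))).mulVec x =
          fun i => algebraMap R (Localization.AtPrime 𝔪) (c i)) :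
    ∃ x : Fin q → R, M.mulVec x = c := by
  by_contra hc
  push_neg at hc
  set N : Submodule R (Fin p → R) := LinearMap.range M.mulVecLin with hN
  have hcN : c ∉ N := by
    rintro ⟨x, hx⟩
    exact hc x hx
  set I : Ideal R := N.comap (LinearMap.toSpanSingleton R _ c) with hI
  have hItop : I ≠ ⊤ := by
    intro h
    apply hcN
    have h1 : (1 : R) ∈ I := h ▸ trivial
    have h2 : (1 : R) • c ∈ N := h1
    simpa using h2
  obtain ⟨P, hP, hle⟩ := I.exists_le_maximal hItop
  haveI := hP
  obtain ⟨x, hx⟩ := hloc P hP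
  set f := algebraMap R (Localization.AtPrime P) with hf
  -- clear denominators
  obtain ⟨s, hs⟩ := IsLocalization.exist_integer_multiples_of_finite P.primeCompl x
  choose a ha using hs
  -- compute: f (M.mulVec a) = f (s • c)
  have key : ∀ i, f ((M.mulVec a) i) = f (((s : R) • c) i) := by
    intro i
    have h1 : (M.map f).mulVec (fun j => f (a j)) = fun i => f ((M.mulVec a) i) := by
      funext i
      exact (RingHom.map_mulVec f M a i).symm
    have h2 : (fun j => f (a j)) = fun j => (s : R) • x j := by
      funext j
      exact ha j
    have h3 : (M.map f).mulVec (fun j => (s : R) • x j) = (s : R) • (M.map f).mulVec x := by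
      rw [show (fun j => (s : R) • x j) = (s : R) • x from rfl]
      exact Matrix.mulVec_smul _ _ _
    have := congrFun h1 i
    rw [h2, h3, hx] at this
    rw [← this]
    simp [Algebra.smul_def, mul_comm, hf]
  -- for each i, get t i ∈ P.primeCompl making equality hold in R
  have key2 : ∀ i, ∃ t : P.primeCompl, (t : R) * ((M.mulVec a) i) = (t : R) * (((s : R) • c) i) := by
    intro i
    obtain ⟨t, ht⟩ := (IsLocalization.eq_iff_exists P.primeCompl _).mp (key i)
    exact ⟨t, ht⟩
  choose t ht using key2
  set T : P.primeCompl := ∏ i, t i with hT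
  have hTmul : ∀ i, (T : R) * ((M.mulVec a) i) = (T : R) * (((s : R) • c) i) := by
    intro i
    have : (T : R) = (∏ j ∈ Finset.univ.erase i, (t j : R)) * (t i : R) := by
      rw [hT]
      push_cast
      rw [Finset.prod_erase_mul _ _ (Finset.mem_univ i)]
    rw [this, mul_assoc, mul_assoc, ht i]
  -- conclude (T * s) • c ∈ N
  have hmem : ((T : R) * (s : R)) • c ∈ N := by
    refine ⟨(T : R) • a, ?_⟩
    funext i
    have := hTmul i
    simp only [Matrix.mulVecLin_apply, Matrix.mulVec_smul, Pi.smul_apply, smul_eq_mul]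
    rw [this]
    simp [smul_eq_mul, mul_assoc]
  have : (T : R) * (s : R) ∈ I := by
    simpa [hI, LinearMap.toSpanSingleton_apply] using hmem
  exact (T * s).2 (hle this)
end
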